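/- Let p > 3 be a prime and let G = Φ₂₃(1⁶) be the group of order p⁶ with presentation on generators α, α₁, α₂, α₃, α₄, γ and relations [αᵢ,α] = αᵢ₊₁ for i = 1,2,3, [α₁,α₂] = γ, αᵖ = 1, γᵖ = 1, and αⱼ^(p) = 1 for j = 1,2,3,4, where αⱼ^(p) denotes αⱼᵖ·αⱼ₊₁^C(p,2)·αⱼ₊₂^C(p,3)·⋯·α₄^C(p,5−j); every commutator of a pair of generators not listed among these relations is declared trivial. Then the Bogomolov multiplier B₀(G) is trivial. -/

import Mathlib

/-!
Φ₂₃(1⁶): relations [αᵢ,α]=αᵢ₊₁ (i=1,2,3), [α₁,α₂]=γ, αᵖ=γᵖ=1, αⱼ^(p)=1 (j=1..4).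
-/

namespace Stmt3

/-- The additive group `ℚ/ℤ`. -/
abbrev QZ : Type := ℚ ⧸ AddSubgroup.zmultiples (1 : ℚ)

/-- An inhomogeneous 2-cocycle on `G` with values in `ℚ/ℤ` (trivial `G`-action). -/
def IsTwoCocycle {G : Type} [Group G] (f : G → G → QZ) : Prop :=
  ∀ g h j : G, f h j - f (g * h) j + f g (h * j) - f g h = 0

/-- An inhomogeneous 2-coboundary on `G` with values in `ℚ/ℤ` (trivial `G`-action). -/
def IsTwoCoboundary {G : Type} [Group G] (f : G → G → QZ) : Prop :=
  ∃ c : G → QZ, ∀ g h : G, f g h = c h - c (g * h) + c g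

/-- A subgroup is bicyclic if it is abelian and generated by at most two elements
(equivalently, cyclic or a direct product of two cyclic groups). -/
def IsBicyclic {G : Type} [Group G] (A : Subgroup G) : Prop :=
  (∀ x y : A, x * y = y * x) ∧ ∃ a b : G, A = Subgroup.closure {a, b}

/-- The Bogomolov multiplier `B₀(G) ⊆ H²(G, ℚ/ℤ)` is trivial, phrased at the level of
2-cocycles: every 2-cocycle whose restriction to each bicyclic subgroup is a coboundary
(i.e. whose class restricts to zero on each bicyclic subgroup) is itself a coboundary
(i.e. its class is zero). -/
def BogomolovMultiplierIsTrivial (G : Type) [Group G] : Prop :=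
  ∀ f : G → G → QZ, IsTwoCocycle f →
    (∀ A : Subgroup G, IsBicyclic A → IsTwoCoboundary (fun a b : ↥A => f ↑a ↑b)) →
    IsTwoCoboundary f

/-- The Bogomolov multiplier `B₀(G) ⊆ H²(G, ℚ/ℤ)` is nontrivial, phrased at the level of
2-cocycles. -/
def BogomolovMultiplierIsNontrivial (G : Type) [Group G] : Prop :=
  ∃ f : G → G → QZ, IsTwoCocycle f ∧
    (∀ A : Subgroup G, IsBicyclic A → IsTwoCoboundary (fun a b : ↥A => f ↑a ↑b)) ∧
    ¬ IsTwoCoboundary f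

/-- The generators. -/
inductive Gen | a | a1 | a2 | a3 | a4 | g

open FreeGroup

/-- The commutator `[x,y] = x⁻¹y⁻¹xy`. -/
def c (x y : FreeGroup Gen) : FreeGroup Gen := x⁻¹ * y⁻¹ * x * y

/-- The defining relators. -/
def rels (p : ℕ) : Set (FreeGroup Gen) :=
  { c (of .a1) (of .a) * (of Gen.a2)⁻¹,
    c (of .a2) (of .a) * (of Gen.a3)⁻¹,
    c (of .a3) (of .a) * (of Gen.a4)⁻¹,
    c (of .a1) (of .a2) * (of Gen.g)⁻¹,
    c (of .a) (of .a4),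
    c (of .a) (of .g),
    c (of .a1) (of .a3),
    c (of .a1) (of .a4),
    c (of .a1) (of .g),
    c (of .a2) (of .a3),
    c (of .a2) (of .a4),
    c (of .a2) (of .g),
    c (of .a3) (of .a4),
    c (of .a3) (of .g),
    c (of .a4) (of .g),
    (of Gen.a) ^ p,
    (of Gen.g) ^ p,
    (of Gen.a1) ^ p * (of Gen.a2) ^ (p.choose 2) * (of Gen.a3) ^ (p.choose 3) * (of Gen.a4) ^ (p.choose 4),
    (of Gen.a2) ^ p * (of Gen.a3) ^ (p.choose 2) * (of Gen.a4) ^ (p.choose 3),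
    (of Gen.a3) ^ p * (of Gen.a4) ^ (p.choose 2),
    (of Gen.a4) ^ p }

/-!
A 2-cocycle `f` defines a central extension `E` of `G` by `ℚ/ℤ`, and `f` is a coboundary as
soon as `E → G` has a homomorphic section. If `f` is a coboundary on bicyclic subgroups then
`f x y = f y x` for commuting `x, y`, so lifts of commuting elements commute in `E`. Take lifts
`A`, `B` of `α`, `α₁` and put `B₂ = [B, A]`, `B₃ = [B₂, A]`, `B₄ = [B₃, A]`, `C = [B, B₂]`: all
commutator relations of `G` then hold in `E`, and once `Aᵖ = 1` Hall's expansions of `[B, Aᵖ]`,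
`[B₂, Aᵖ]`, `[B₃, Aᵖ]` and `[B, B₂ᵖ]` give the power relations of `α₂, α₃, α₄, γ`. Correcting
`A` and `B` by central elements, which is possible because `ℚ/ℤ` is divisible, makes `Aᵖ = 1`
and `α₁^(p) = 1` hold too.
So the generators lift to a solution of the defining relations, which is the required section.
-/

section Bracket

variable {E : Type*} [Group E]

-- Mathlib's `⁅x, y⁆` is `x * y * x⁻¹ * y⁻¹`; the presentation uses the other convention.
def bracket (x y : E) : E := x⁻¹ * y⁻¹ * x * y

theorem bracket_eq_one_iff {x y : E} : bracket x y = 1 ↔ Commute x y := by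
  rw [bracket, show x⁻¹ * y⁻¹ * x * y = (y * x)⁻¹ * (x * y) by group, inv_mul_eq_one, eq_comm]
  rfl

theorem bracket_one_left (y : E) : bracket 1 y = 1 :=
  bracket_eq_one_iff.2 (Commute.one_left y)

theorem bracket_one_right (x : E) : bracket x 1 = 1 :=
  bracket_eq_one_iff.2 (Commute.one_right x)

theorem map_bracket {E' F : Type*} [Group E'] [FunLike F E E'] [MonoidHomClass F E E'] (φ : F)
    (x y : E) : φ (bracket x y) = bracket (φ x) (φ y) := by
  simp only [bracket, _root_.map_mul, _root_.map_inv]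

theorem bracket_mul_right (x u v : E) :
    bracket x (u * v) = bracket x v * (v⁻¹ * bracket x u * v) := by
  simp only [bracket]; group

theorem bracket_mul_left_of_commute {z : E} (x : E) {y : E} (h : Commute z y) :
    bracket (z * x) y = bracket x y := by
  have hconj : z⁻¹ * y⁻¹ * z = y⁻¹ := by rw [mul_assoc, ← h.inv_right.eq, inv_mul_cancel_left]
  calc bracket (z * x) y = x⁻¹ * (z⁻¹ * y⁻¹ * z) * x * y := by simp only [bracket]; group
    _ = bracket x y := by rw [hconj]; rfl

/-- Hall's expansion of `[x, yⁿ]` in class at most three. -/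
theorem bracket_pow_right {x y d e g : E} (hd : bracket x y = d) (he : bracket d y = e)
    (hg : bracket e y = g) (hde : Commute d e) (heg : Commute e g) (hgy : Commute g y) (n : ℕ) :
    bracket x (y ^ n) = d ^ n * e ^ n.choose 2 * g ^ n.choose 3 := by
  let σ := MulAut.conj y⁻¹
  have hσ (z : E) : y⁻¹ * z * y = σ z := by simp [σ]
  have hσd : σ d = d * e := by rw [← hσ, ← he, bracket]; group
  have hσe : σ e = e * g := by rw [← hσ, ← hg, bracket]; group
  have hσg : σ g = g := by rw [← hσ, mul_assoc, hgy.eq, inv_mul_cancel_left]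
  induction n with
  | zero => simp [bracket_one_right]
  | succ n ih =>
    rw [pow_succ, bracket_mul_right, hd, hσ, ih, _root_.map_mul, _root_.map_mul, _root_.map_pow,
      _root_.map_pow, _root_.map_pow, hσd, hσe, hσg, hde.mul_pow, heg.mul_pow,
      Nat.choose_succ_succ n 1, Nat.choose_succ_succ n 2, Nat.choose_one_right,
      pow_succ' d n, pow_add e n, pow_add g (n.choose 2)]
    simp only [mul_assoc]

end Bracket

section Relations

variable {E : Type*} [Group E]

theorem phi23_pow_relations {n : ℕ} {a b b2 b3 b4 c : E} (ha : a ^ n = 1)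
    (h2 : bracket b a = b2) (h3 : bracket b2 a = b3) (h4 : bracket b3 a = b4)
    (hc : bracket b b2 = c) (h4a : Commute b4 a) (h34 : Commute b3 b4) (h23 : Commute b2 b3)
    (hc2 : Commute c b2) (hb3 : Commute b b3) (hb4 : Commute b b4) :
    b2 ^ n * b3 ^ n.choose 2 * b4 ^ n.choose 3 = 1 ∧ b3 ^ n * b4 ^ n.choose 2 = 1 ∧
      b4 ^ n = 1 ∧ c ^ n = 1 := by
  have h4a' := bracket_eq_one_iff.2 h4a
  have hc2' := bracket_eq_one_iff.2 hc2
  have hb2 : b2 ^ n * b3 ^ n.choose 2 * b4 ^ n.choose 3 = 1 := by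
    rw [← bracket_pow_right h2 h3 h4 h23 h34 h4a, ha, bracket_one_right]
  refine ⟨hb2, ?_, ?_, ?_⟩
  · have h := bracket_pow_right h3 h4 h4a' h34 (.one_right _) (.one_left _) n
    rwa [ha, bracket_one_right, one_pow, mul_one, eq_comm] at h
  · have h := bracket_pow_right h4 h4a' (bracket_one_left a) (.one_right _) (.one_right _)
      (.one_left _) n
    rwa [ha, bracket_one_right, one_pow, one_pow, mul_one, mul_one, eq_comm] at h
  · -- `b` commutes with `b2 ^ n`, which the first relation writes in terms of `b3` and `b4`
    have hbn : Commute b (b2 ^ n) := by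
      rw [eq_inv_of_mul_eq_one_left (a := b2 ^ n) (b := b3 ^ n.choose 2 * b4 ^ n.choose 3)
        (by rwa [mul_assoc] at hb2)]
      exact ((hb3.pow_right _).mul_right (hb4.pow_right _)).inv_right
    have h := bracket_pow_right hc hc2' (bracket_one_left b2) (.one_right _) (.one_right _)
      (.one_left _) n
    rwa [bracket_eq_one_iff.2 hbn, one_pow, one_pow, mul_one, mul_one, eq_comm] at h

def phi23Family (a a1 : E) : Gen → E
  | .a => a
  | .a1 => a1
  | .a2 => bracket a1 a
  | .a3 => bracket (bracket a1 a) a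
  | .a4 => bracket (bracket (bracket a1 a) a) a
  | .g => bracket a1 (bracket a1 a)

variable (p : ℕ)

structure Phi23Relations (F : Gen → E) : Prop where
  bracket_a1_a : bracket (F .a1) (F .a) = F .a2
  bracket_a2_a : bracket (F .a2) (F .a) = F .a3
  bracket_a3_a : bracket (F .a3) (F .a) = F .a4
  bracket_a1_a2 : bracket (F .a1) (F .a2) = F .g
  commute_a_a4 : Commute (F .a) (F .a4)
  commute_a_g : Commute (F .a) (F .g)
  commute_a1_a3 : Commute (F .a1) (F .a3)
  commute_a1_a4 : Commute (F .a1) (F .a4)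
  commute_a1_g : Commute (F .a1) (F .g)
  commute_a2_a3 : Commute (F .a2) (F .a3)
  commute_a2_a4 : Commute (F .a2) (F .a4)
  commute_a2_g : Commute (F .a2) (F .g)
  commute_a3_a4 : Commute (F .a3) (F .a4)
  commute_a3_g : Commute (F .a3) (F .g)
  commute_a4_g : Commute (F .a4) (F .g)
  pow_a : F .a ^ p = 1
  pow_g : F .g ^ p = 1
  pow_a1 : F .a1 ^ p * F .a2 ^ p.choose 2 * F .a3 ^ p.choose 3 * F .a4 ^ p.choose 4 = 1
  pow_a2 : F .a2 ^ p * F .a3 ^ p.choose 2 * F .a4 ^ p.choose 3 = 1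
  pow_a3 : F .a3 ^ p * F .a4 ^ p.choose 2 = 1
  pow_a4 : F .a4 ^ p = 1

theorem phi23Relations_iff (F : Gen → E) :
    Phi23Relations p F ↔ ∀ r ∈ rels p, FreeGroup.lift F r = 1 := by
  have hc (x y : FreeGroup Gen) : c x y = bracket x y := rfl
  simp only [rels, Set.mem_insert_iff, Set.mem_singleton_iff, forall_eq_or_imp, forall_eq, hc,
    _root_.map_mul, _root_.map_inv, _root_.map_pow, map_bracket, FreeGroup.lift_apply_of,
    mul_inv_eq_one, bracket_eq_one_iff]
  constructor
  · rintro ⟨_⟩; tauto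
  · intro h; constructor <;> tauto

end Relations

section Presentation

variable (p : ℕ)

theorem phi23Relations_of : Phi23Relations p (PresentedGroup.of (rels := rels p)) := by
  have hlift : FreeGroup.lift PresentedGroup.of = PresentedGroup.mk (rels p) :=
    FreeGroup.ext_hom _ _ fun _ => FreeGroup.lift_apply_of
  exact (phi23Relations_iff p _).2 fun r hr => hlift ▸ PresentedGroup.one_of_mem hr

variable {p} {E : Type*} [Group E] (π : E →* PresentedGroup (rels p)) {a a1 : E}

theorem map_phi23Family (ha : π a = .of .a) (ha1 : π a1 = .of .a1) (j : Gen) :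
    π (phi23Family a a1 j) = .of j := by
  have hG := phi23Relations_of p
  cases j <;> simp only [phi23Family, map_bracket, ha, ha1, hG.bracket_a1_a, hG.bracket_a2_a,
    hG.bracket_a3_a, hG.bracket_a1_a2]

theorem phi23Relations_phi23Family (hπ : ∀ x y, Commute (π x) (π y) → Commute x y)
    (ha : π a = .of .a) (ha1 : π a1 = .of .a1) (hpa : a ^ p = 1)
    (hpa1 : a1 ^ p * bracket a1 a ^ p.choose 2 * bracket (bracket a1 a) a ^ p.choose 3 *
      bracket (bracket (bracket a1 a) a) a ^ p.choose 4 = 1) :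
    Phi23Relations p (phi23Family a a1) := by
  have hG := phi23Relations_of p
  have hF {x y : Gen} (h : Commute (PresentedGroup.of (rels := rels p) x) (.of y)) :
      Commute (phi23Family a a1 x) (phi23Family a a1 y) :=
    hπ _ _ (by rwa [map_phi23Family π ha ha1, map_phi23Family π ha ha1])
  obtain ⟨hpa2, hpa3, hpa4, hpg⟩ := phi23_pow_relations hpa rfl rfl rfl rfl
    (hF hG.commute_a_a4.symm) (hF hG.commute_a3_a4) (hF hG.commute_a2_a3)
    (hF hG.commute_a2_g.symm) (hF hG.commute_a1_a3) (hF hG.commute_a1_a4)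
  exact ⟨rfl, rfl, rfl, rfl, hF hG.commute_a_a4, hF hG.commute_a_g, hF hG.commute_a1_a3,
    hF hG.commute_a1_a4, hF hG.commute_a1_g, hF hG.commute_a2_a3, hF hG.commute_a2_a4,
    hF hG.commute_a2_g, hF hG.commute_a3_a4, hF hG.commute_a3_g, hF hG.commute_a4_g, hpa, hpg,
    hpa1, hpa2, hpa3, hpa4⟩

end Presentation

theorem QZ.exists_nsmul_eq {n : ℕ} (hn : n ≠ 0) (w : QZ) : ∃ u : QZ, n • u = w := by
  obtain ⟨q, rfl⟩ := QuotientAddGroup.mk_surjective w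
  refine ⟨((q / n : ℚ) : QZ), ?_⟩
  rw [← QuotientAddGroup.mk_nsmul, nsmul_eq_mul, mul_div_cancel₀ q (Nat.cast_ne_zero.2 hn)]

section CocycleExtension

variable {G : Type} [Group G] {f : G → G → QZ}

theorem IsTwoCocycle.apply_one_left (hf : IsTwoCocycle f) (g : G) : f 1 g = f 1 1 := by
  simpa [sub_eq_zero] using hf 1 1 g

theorem IsTwoCocycle.apply_one_right (hf : IsTwoCocycle f) (g : G) : f g 1 = f 1 1 := by
  simpa [sub_eq_zero, eq_comm] using hf g 1 1

theorem apply_comm_of_bicyclic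
    (hbi : ∀ A : Subgroup G, IsBicyclic A → IsTwoCoboundary (fun a b : ↥A => f ↑a ↑b))
    {x y : G} (h : Commute x y) : f x y = f y x := by
  let A := Subgroup.closure ({x, y} : Set G)
  have hA : ∀ a b : A, a * b = b * a :=
    (Subgroup.isMulCommutative_closure (k := {x, y}) (by
      rintro _ (rfl | rfl) _ (rfl | rfl) <;> first | rfl | exact h | exact h.symm)).is_comm.comm
  obtain ⟨β, hβ⟩ := hbi A ⟨hA, x, y, rfl⟩
  let x' : A := ⟨x, Subgroup.subset_closure (by simp)⟩
  let y' : A := ⟨y, Subgroup.subset_closure (by simp)⟩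
  calc f x y = β y' - β (x' * y') + β x' := hβ x' y'
    _ = β x' - β (y' * x') + β y' := by rw [hA]; abel
    _ = f y x := (hβ y' x').symm

@[ext]
structure CocycleExt (f : G → G → QZ) (hf : IsTwoCocycle f) where
  base : G
  fiber : QZ

namespace CocycleExt

variable {hf : IsTwoCocycle f}

instance : Group (CocycleExt f hf) where
  mul x y := ⟨x.base * y.base, x.fiber + y.fiber + f x.base y.base⟩
  one := ⟨1, -f 1 1⟩
  inv x := ⟨x.base⁻¹, -x.fiber - f x.base⁻¹ x.base - f 1 1⟩
  mul_assoc x y z := by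
    ext
    · exact mul_assoc _ _ _
    · change x.fiber + y.fiber + f x.base y.base + z.fiber + f (x.base * y.base) z.base =
        x.fiber + (y.fiber + z.fiber + f y.base z.base) + f x.base (y.base * z.base)
      linear_combination (norm := abel) -hf x.base y.base z.base
  one_mul x := by
    ext
    · exact one_mul _
    · change -f 1 1 + x.fiber + f 1 x.base = x.fiber
      rw [hf.apply_one_left x.base]; abel
  mul_one x := by
    ext
    · exact mul_one _
    · change x.fiber + -f 1 1 + f x.base 1 = x.fiber
      rw [hf.apply_one_right x.base]; abel
  inv_mul_cancel x := by
    ext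
    · exact inv_mul_cancel _
    · change -x.fiber - f x.base⁻¹ x.base - f 1 1 + x.fiber + f x.base⁻¹ x.base = -f 1 1
      abel

@[simp] theorem mul_base (x y : CocycleExt f hf) : (x * y).base = x.base * y.base := rfl
@[simp] theorem mul_fiber (x y : CocycleExt f hf) :
    (x * y).fiber = x.fiber + y.fiber + f x.base y.base := rfl

def proj : CocycleExt f hf →* G where
  toFun := base
  map_one' := rfl
  map_mul' _ _ := rfl

@[simp] theorem pow_base (x : CocycleExt f hf) (n : ℕ) : (x ^ n).base = x.base ^ n :=
  map_pow proj x n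

@[simp] theorem bracket_base (x y : CocycleExt f hf) :
    (bracket x y).base = bracket x.base y.base :=
  map_bracket proj x y

def central (v : QZ) : CocycleExt f hf := ⟨1, v - f 1 1⟩

@[simp] theorem central_base (v : QZ) : (central v : CocycleExt f hf).base = 1 := rfl

theorem commute_central (v : QZ) (x : CocycleExt f hf) : Commute (central v) x := by
  ext
  · exact (Commute.one_left _).eq
  · change v - f 1 1 + x.fiber + f 1 x.base = x.fiber + (v - f 1 1) + f x.base 1
    rw [hf.apply_one_left x.base, hf.apply_one_right x.base]; abel

theorem central_add (v w : QZ) :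
    (central (v + w) : CocycleExt f hf) = central v * central w := by
  ext
  · exact (one_mul _).symm
  · change v + w - f 1 1 = v - f 1 1 + (w - f 1 1) + f 1 1
    abel

theorem central_zero : (central 0 : CocycleExt f hf) = 1 := by
  ext
  · rfl
  · change 0 - f 1 1 = -f 1 1
    abel

theorem central_nsmul (v : QZ) (n : ℕ) :
    (central (n • v) : CocycleExt f hf) = central v ^ n := by
  induction n with
  | zero => rw [zero_smul, central_zero, pow_zero]
  | succ n ih => rw [succ_nsmul, central_add, ih, pow_succ]

theorem eq_central_of_base_eq_one {x : CocycleExt f hf} (h : x.base = 1) :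
    x = central (x.fiber + f 1 1) := by
  ext
  · exact h
  · exact (add_sub_cancel_right _ _).symm

theorem exists_central_mul_pow_mul_eq_one {n : ℕ} (hn : n ≠ 0) (x y : CocycleExt f hf)
    (h : (x ^ n * y).base = 1) : ∃ u : QZ, (central u * x) ^ n * y = 1 := by
  obtain ⟨u, hu⟩ := QZ.exists_nsmul_eq hn (-((x ^ n * y).fiber + f 1 1))
  refine ⟨u, ?_⟩
  rw [(commute_central u x).mul_pow, mul_assoc, eq_central_of_base_eq_one h, ← central_nsmul,
    ← central_add, hu, neg_add_cancel, central_zero]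

theorem commute_of_commute_base
    (hbi : ∀ A : Subgroup G, IsBicyclic A → IsTwoCoboundary (fun a b : ↥A => f ↑a ↑b))
    {x y : CocycleExt f hf} (h : Commute x.base y.base) : Commute x y := by
  ext
  · exact h.eq
  · change x.fiber + y.fiber + f x.base y.base = y.fiber + x.fiber + f y.base x.base
    rw [add_comm x.fiber, apply_comm_of_bicyclic hbi h]

theorem isTwoCoboundary_of_section (s : G →* CocycleExt f hf)
    (hs : proj.comp s = MonoidHom.id G) : IsTwoCoboundary f := by
  have hbase (x : G) : (s x).base = x := DFunLike.congr_fun hs x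
  refine ⟨fun x => -(s x).fiber, fun x y => ?_⟩
  have h := congrArg fiber (map_mul s x y)
  rw [mul_fiber, hbase, hbase] at h
  change f x y = -(s y).fiber - -(s (x * y)).fiber + -(s x).fiber
  rw [h]
  abel

end CocycleExt

end CocycleExtension

namespace CocycleExt

variable {p : ℕ} {f : PresentedGroup (rels p) → PresentedGroup (rels p) → QZ}
  (hf : IsTwoCocycle f)

theorem exists_phi23_lift (hp : p ≠ 0) :
    ∃ a a1 : CocycleExt f hf,
      a.base = .of .a ∧ a1.base = .of .a1 ∧ a ^ p = 1 ∧
      a1 ^ p * bracket a1 a ^ p.choose 2 * bracket (bracket a1 a) a ^ p.choose 3 *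
        bracket (bracket (bracket a1 a) a) a ^ p.choose 4 = 1 := by
  have hG := phi23Relations_of p
  let a0 : CocycleExt f hf := ⟨.of .a, 0⟩
  obtain ⟨u, hu⟩ := exists_central_mul_pow_mul_eq_one hp a0 1 (by simpa [a0] using hG.pow_a)
  set a : CocycleExt f hf := central u * a0
  have ha : a.base = .of .a := by simp [a, a0]
  let b : CocycleExt f hf := ⟨.of .a1, 0⟩
  obtain ⟨v, hv⟩ := exists_central_mul_pow_mul_eq_one hp b (bracket b a ^ p.choose 2 *
    bracket (bracket b a) a ^ p.choose 3 * bracket (bracket (bracket b a) a) a ^ p.choose 4) (by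
      simpa [ha, b, mul_assoc, hG.bracket_a1_a, hG.bracket_a2_a, hG.bracket_a3_a] using hG.pow_a1)
  refine ⟨a, central v * b, ha, by simp [b], by simpa using hu, ?_⟩
  rw [bracket_mul_left_of_commute b (commute_central v a)]
  simpa only [mul_assoc] using hv

end CocycleExt

theorem bogomolov_trivial_Phi23_general (p : ℕ) (hp : p.Prime) :
    BogomolovMultiplierIsTrivial (PresentedGroup (rels p)) := by
  intro f hf hbi
  obtain ⟨a, a1, ha, ha1, hpa, hpa1⟩ := CocycleExt.exists_phi23_lift hf hp.ne_zero
  have hF := phi23Relations_phi23Family CocycleExt.proj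
    (fun _ _ => CocycleExt.commute_of_commute_base hbi) ha ha1 hpa hpa1
  refine CocycleExt.isTwoCoboundary_of_section
    (PresentedGroup.toGroup ((phi23Relations_iff p _).1 hF)) (PresentedGroup.ext fun j => ?_)
  simp only [MonoidHom.comp_apply, PresentedGroup.toGroup.of, MonoidHom.id_apply,
    map_phi23Family CocycleExt.proj ha ha1]

theorem bogomolov_trivial_Phi23 (p : ℕ) (hp : p.Prime) (h3 : 3 < p)
    (hcard : Nat.card (PresentedGroup (rels p)) = p ^ 6) :
    BogomolovMultiplierIsTrivial (PresentedGroup (rels p)) :=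
  bogomolov_trivial_Phi23_general p hp

end Stmt3
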